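/- arXiv:1908.04033 — 3 statements merged into one kernel-verified Lean document; each statement's English description precedes it below -/
import Mathlib

section
/- Assume d(n) → ∞ and (n − d)/d → 0. Then for every fixed r > 0, F(n,d,−1,−r/√d) → 0 and F(n,d, r/√d, 1) → 0 as n → ∞; that is, the expected number of facets whose height lies outside the interval (−r/√d, r/√d) tends to zero. -/
open Filter

noncomputable def c1 (d : ℕ) : ℝ :=
  Real.Gamma ((d : ℝ) / 2) / (Real.sqrt Real.pi * Real.Gamma (((d : ℝ) - 1) / 2))

noncomputable def c2 (d : ℕ) : ℝ :=
  Real.Gamma (((d : ℝ) ^ 2 - 2 * (d : ℝ) + 2) / 2) /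
    (Real.sqrt Real.pi * Real.Gamma (((d : ℝ) ^ 2 - 2 * (d : ℝ) + 1) / 2))

/-- `II n d a b` is the integral `I(n,d,a,b)` from the paper. -/
noncomputable def II (n d : ℕ) (a b : ℝ) : ℝ :=
  ∫ h in a..b, (1 - h ^ 2) ^ (((d : ℝ) ^ 2 - 2 * (d : ℝ) - 1) / 2) *
    (c1 d * ∫ s in (-1 : ℝ)..h, (1 - s ^ 2) ^ (((d : ℝ) - 3) / 2)) ^ (n - d)

/-- `FF n d a b` is the expected number of facets with height in `[a,b]`. -/
noncomputable def FF (n d : ℕ) (a b : ℝ) : ℝ :=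
  (n.choose d : ℝ) * 2 * c2 d * II n d a b

/-- The standard normal CDF. -/
noncomputable def stdPhi (r : ℝ) : ℝ :=
  (Real.sqrt (2 * Real.pi))⁻¹ * ∫ s in Set.Iic r, Real.exp (-s ^ 2 / 2)

/-!
The integrand of `I` is `(1 - h²)^((d² - 2d - 1)/2) · G(h)^(n - d)` with
`G(h) = c₁ ∫_{-1}^h (1 - s²)^((d-3)/2)`. Log-convexity of `Γ` gives `c₁(d) ≤ √((d-1)/2)` and
`c₂(d) ≤ d`, and comparing `(1 - s²)^p` with `exp (-p s²)` bounds the integral by a Gaussian one,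
so `G ≤ 3`. For `|h| ≥ r/√d` the same comparison gives `(1 - h²)^((d² - 2d - 1)/2) ≤ exp (-d r²/4)`,
hence `|F| ≤ 4d · C(n,d) 3^(n-d) · exp (-d r²/4)`. With `n - d = t d`,
`C(n,d) 3^(n-d) ≤ (3e n/(n-d))^(n-d) = exp (d (t log (3e(1+t)) - t log t))`, and this exponent is
`o(d)` as `t → 0`, so the bound decays like `d · exp (-d r²/8)`.
-/

open Real Set Topology MeasureTheory

namespace Real

theorem Gamma_add_half_le_mul_sqrt {x : ℝ} (hx : 0 < x) :
    Gamma (x + 1 / 2) ≤ Gamma x * √x := by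
  have hG := Gamma_pos_of_pos hx
  have h := Gamma_mul_add_mul_le_rpow_Gamma_mul_rpow_Gamma hx (add_pos hx one_pos)
    (by norm_num : (0 : ℝ) < 1 / 2) (by norm_num : (0 : ℝ) < 1 / 2) (by norm_num)
  rwa [show 1 / 2 * x + 1 / 2 * (x + 1) = x + 1 / 2 by ring, Gamma_add_one hx.ne',
    ← sqrt_eq_rpow, ← sqrt_eq_rpow, ← sqrt_mul hG.le,
    show Gamma x * (x * Gamma x) = Gamma x ^ 2 * x by ring,
    sqrt_mul (by positivity), sqrt_sq hG.le] at h

theorem Gamma_add_half_div_le_sqrt {x : ℝ} (hx : 0 < x) :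
    Gamma (x + 1 / 2) / (√π * Gamma x) ≤ √x := by
  have hG := Gamma_pos_of_pos hx
  have hπ : 1 ≤ √π := one_le_sqrt.2 (by linarith [pi_gt_three])
  rw [div_le_iff₀ (by positivity)]
  calc Gamma (x + 1 / 2) ≤ Gamma x * √x := Gamma_add_half_le_mul_sqrt hx
    _ ≤ √x * (√π * Gamma x) := by
        nlinarith [mul_nonneg (mul_nonneg (sqrt_nonneg x) hG.le) (sub_nonneg.2 hπ)]

theorem rpow_one_sub_le_exp_neg_mul {x p : ℝ} (hx : x ≤ 1) (hp : 0 ≤ p) :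
    (1 - x) ^ p ≤ exp (-(p * x)) := by
  calc (1 - x) ^ p ≤ exp (-x) ^ p := rpow_le_rpow (by linarith) (one_sub_le_exp_neg x) hp
    _ = exp (-(p * x)) := by rw [← exp_mul]; ring_nf

theorem integral_one_sub_sq_rpow_le {p a b : ℝ} (hp : 0 < p) (ha : -1 ≤ a) (hab : a ≤ b)
    (hb : b ≤ 1) : ∫ s in a..b, (1 - s ^ 2) ^ p ≤ √(π / p) := by
  have hsq : ∀ s ∈ Ioc a b, s ^ 2 ≤ 1 := fun s hs => by nlinarith [hs.1, hs.2]
  rw [intervalIntegral.integral_of_le hab, ← integral_gaussian p]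
  calc ∫ s in Ioc a b, (1 - s ^ 2) ^ p ≤ ∫ s in Ioc a b, exp (-p * s ^ 2) := by
        refine integral_mono_of_nonneg ?_ (integrable_exp_neg_mul_sq hp).integrableOn ?_
        · filter_upwards [ae_restrict_mem measurableSet_Ioc] with s hs
          exact rpow_nonneg (by linarith [hsq s hs]) p
        · filter_upwards [ae_restrict_mem measurableSet_Ioc] with s hs
          simpa [neg_mul] using rpow_one_sub_le_exp_neg_mul (hsq s hs) hp.le
    _ ≤ ∫ s, exp (-p * s ^ 2) := setIntegral_le_integral
        (integrable_exp_neg_mul_sq hp) (.of_forall fun _ => (exp_pos _).le)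

end Real

theorem c1_nonneg {d : ℕ} (hd : 1 ≤ d) : 0 ≤ c1 d := by
  have hd' : (1 : ℝ) ≤ d := by exact_mod_cast hd
  unfold c1
  exact div_nonneg (Gamma_nonneg_of_nonneg (by positivity))
    (mul_nonneg (sqrt_nonneg _) (Gamma_nonneg_of_nonneg (by linarith)))

theorem c1_le_sqrt {d : ℕ} (hd : 2 ≤ d) : c1 d ≤ √(((d : ℝ) - 1) / 2) := by
  have hd' : (2 : ℝ) ≤ d := by exact_mod_cast hd
  have h := Gamma_add_half_div_le_sqrt (x := ((d : ℝ) - 1) / 2) (by linarith)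
  rwa [show ((d : ℝ) - 1) / 2 + 1 / 2 = d / 2 by ring] at h

theorem c2_nonneg (d : ℕ) : 0 ≤ c2 d := by
  unfold c2
  have hsq := sq_nonneg ((d : ℝ) - 1)
  exact div_nonneg (Gamma_nonneg_of_nonneg (by nlinarith))
    (mul_nonneg (sqrt_nonneg _) (Gamma_nonneg_of_nonneg (by nlinarith)))

theorem c2_le {d : ℕ} (hd : 2 ≤ d) : c2 d ≤ d := by
  have hd' : (2 : ℝ) ≤ d := by exact_mod_cast hd
  have h := Gamma_add_half_div_le_sqrt (x := ((d : ℝ) ^ 2 - 2 * d + 1) / 2) (by nlinarith)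
  rw [show ((d : ℝ) ^ 2 - 2 * d + 1) / 2 + 1 / 2 = ((d : ℝ) ^ 2 - 2 * d + 2) / 2 by ring] at h
  calc c2 d ≤ √(((d : ℝ) ^ 2 - 2 * d + 1) / 2) := h
    _ ≤ √((d : ℝ) ^ 2) := sqrt_le_sqrt (by nlinarith)
    _ = d := sqrt_sq (by positivity)

theorem c1_mul_integral_nonneg {d : ℕ} (hd : 1 ≤ d) {h : ℝ} (h₀ : -1 ≤ h) (h₁ : h ≤ 1) :
    0 ≤ c1 d * ∫ s in (-1 : ℝ)..h, (1 - s ^ 2) ^ (((d : ℝ) - 3) / 2) :=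
  mul_nonneg (c1_nonneg hd) <| intervalIntegral.integral_nonneg h₀ fun s hs =>
    rpow_nonneg (by nlinarith [hs.1, hs.2]) _

theorem c1_mul_integral_le_three {d : ℕ} (hd : 5 ≤ d) {h : ℝ} (h₀ : -1 ≤ h) (h₁ : h ≤ 1) :
    c1 d * ∫ s in (-1 : ℝ)..h, (1 - s ^ 2) ^ (((d : ℝ) - 3) / 2) ≤ 3 := by
  have hd' : (5 : ℝ) ≤ d := by exact_mod_cast hd
  have hp : 0 < ((d : ℝ) - 3) / 2 := by linarith
  calc c1 d * ∫ s in (-1 : ℝ)..h, (1 - s ^ 2) ^ (((d : ℝ) - 3) / 2)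
      ≤ √(((d : ℝ) - 1) / 2) * √(π / (((d : ℝ) - 3) / 2)) :=
        mul_le_mul (c1_le_sqrt (by omega)) (integral_one_sub_sq_rpow_le hp le_rfl h₀ h₁)
          (intervalIntegral.integral_nonneg h₀ fun s hs =>
            rpow_nonneg (by nlinarith [hs.1, hs.2]) _) (sqrt_nonneg _)
    _ = √(π * ((d - 1) / (d - 3))) := by
        rw [← sqrt_mul (by linarith)]
        congr 1
        field_simp
    _ ≤ √(3 ^ 2) := by
        gcongr
        rw [← mul_div_assoc, div_le_iff₀ (by linarith)]
        nlinarith [pi_lt_four]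
    _ = 3 := sqrt_sq (by norm_num)

theorem rpow_one_sub_sq_le_exp_of_le_abs {d : ℕ} (hd : 5 ≤ d) {r h : ℝ} (hr : 0 ≤ r)
    (hrh : r / √d ≤ |h|) (h₁ : h ^ 2 ≤ 1) :
    (1 - h ^ 2) ^ (((d : ℝ) ^ 2 - 2 * d - 1) / 2) ≤ exp (-(d * r ^ 2 / 4)) := by
  have hd' : (5 : ℝ) ≤ d := by exact_mod_cast hd
  have hheight : r ^ 2 / d ≤ h ^ 2 := by
    have := pow_le_pow_left₀ (by positivity) hrh 2
    rwa [div_pow, sq_sqrt (by positivity), sq_abs] at this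
  calc (1 - h ^ 2) ^ (((d : ℝ) ^ 2 - 2 * d - 1) / 2)
      ≤ exp (-(((d : ℝ) ^ 2 - 2 * d - 1) / 2 * h ^ 2)) :=
        rpow_one_sub_le_exp_neg_mul h₁ (by nlinarith)
    _ ≤ exp (-(d * r ^ 2 / 4)) := by
        gcongr
        calc d * r ^ 2 / 4 ≤ ((d : ℝ) ^ 2 - 2 * d - 1) / 2 * (r ^ 2 / d) := by
              rw [mul_div_assoc', le_div_iff₀ (by positivity)]
              nlinarith [mul_nonneg (sq_nonneg r) (by nlinarith : (0 : ℝ) ≤ d ^ 2 - 4 * d - 2)]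
          _ ≤ ((d : ℝ) ^ 2 - 2 * d - 1) / 2 * h ^ 2 := by gcongr; nlinarith

theorem norm_II_le {n d : ℕ} (hd : 5 ≤ d) {a b r : ℝ} (hr : 0 ≤ r) (ha : -1 ≤ a) (hab : a ≤ b)
    (hb : b ≤ 1) (hh : ∀ h ∈ Icc a b, r / √d ≤ |h|) :
    ‖II n d a b‖ ≤ 2 * (3 ^ (n - d) * exp (-(d * r ^ 2 / 4))) := by
  have hpt : ∀ h ∈ uIoc a b, ‖(1 - h ^ 2) ^ (((d : ℝ) ^ 2 - 2 * d - 1) / 2) *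
      (c1 d * ∫ s in (-1 : ℝ)..h, (1 - s ^ 2) ^ (((d : ℝ) - 3) / 2)) ^ (n - d)‖ ≤
      3 ^ (n - d) * exp (-(d * r ^ 2 / 4)) := by
    intro h hh'
    rw [uIoc_of_le hab] at hh'
    have h₀ : -1 ≤ h := ha.trans hh'.1.le
    have h₁ : h ≤ 1 := hh'.2.trans hb
    have hsq : h ^ 2 ≤ 1 := by nlinarith
    have hinner₀ := c1_mul_integral_nonneg (d := d) (by omega) h₀ h₁
    rw [norm_mul, norm_of_nonneg (rpow_nonneg (by linarith) _), norm_pow,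
      norm_of_nonneg hinner₀, mul_comm]
    exact mul_le_mul (pow_le_pow_left₀ hinner₀ (c1_mul_integral_le_three hd h₀ h₁) _)
      (rpow_one_sub_sq_le_exp_of_le_abs hd hr (hh h (Ioc_subset_Icc_self hh')) hsq)
      (rpow_nonneg (by linarith) _) (by positivity)
  calc ‖II n d a b‖ ≤ 3 ^ (n - d) * exp (-(d * r ^ 2 / 4)) * |b - a| :=
        intervalIntegral.norm_integral_le_of_norm_le_const hpt
    _ ≤ 2 * (3 ^ (n - d) * exp (-(d * r ^ 2 / 4))) := by
        rw [abs_of_nonneg (by linarith), mul_comm]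
        gcongr
        linarith

theorem norm_FF_le {n d : ℕ} (hd : 5 ≤ d) {a b r : ℝ} (hr : 0 ≤ r) (ha : -1 ≤ a) (hab : a ≤ b)
    (hb : b ≤ 1) (hh : ∀ h ∈ Icc a b, r / √d ≤ |h|) :
    ‖FF n d a b‖ ≤ 4 * d * (n.choose d * 3 ^ (n - d)) * exp (-(d * r ^ 2 / 4)) :=
  calc ‖FF n d a b‖ = n.choose d * 2 * c2 d * ‖II n d a b‖ := by
        rw [FF, norm_mul, norm_of_nonneg (mul_nonneg (by positivity) (c2_nonneg d))]
    _ ≤ n.choose d * 2 * d * (2 * (3 ^ (n - d) * exp (-(d * r ^ 2 / 4)))) := by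
        gcongr
        · exact c2_le (by omega)
        · exact norm_II_le hd hr ha hab hb hh
    _ = 4 * d * (n.choose d * 3 ^ (n - d)) * exp (-(d * r ^ 2 / 4)) := by ring

theorem Nat.choose_le_exp_one_mul_div_pow (n k : ℕ) :
    (n.choose k : ℝ) ≤ (exp 1 * n / k) ^ k := by
  rcases k.eq_zero_or_pos with rfl | hk
  · simp
  have hk' : (0 : ℝ) < k := by exact_mod_cast hk
  calc (n.choose k : ℝ) ≤ n ^ k / k.factorial := Nat.choose_le_pow_div k n
    _ = (n / k) ^ k * (k ^ k / k.factorial) := by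
        rw [div_pow]; field_simp
    _ ≤ (n / k) ^ k * exp k := by gcongr; exact pow_div_factorial_le_exp (x := (k : ℝ)) hk'.le k
    _ = (exp 1 * n / k) ^ k := by rw [← exp_one_pow]; ring

noncomputable def chooseRate (c t : ℝ) : ℝ := t * log (c * exp 1 * (1 + t)) + negMulLog t

theorem choose_mul_pow_le_exp_chooseRate {c : ℝ} (hc : 0 < c) {n d : ℕ} (hd : 0 < d) :
    (n.choose d : ℝ) * c ^ (n - d) ≤ exp (d * chooseRate c (((n : ℝ) - d) / d)) := by
  rcases lt_or_ge n d with hnd | hdn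
  · simp [Nat.choose_eq_zero_of_lt hnd, (exp_pos _).le]
  obtain ⟨m, rfl⟩ := Nat.exists_eq_add_of_le hdn
  rcases m.eq_zero_or_pos with rfl | hm
  · simp [chooseRate]
  have hd' : (0 : ℝ) < d := by exact_mod_cast hd
  have hm' : (0 : ℝ) < m := by exact_mod_cast hm
  rw [Nat.choose_symm_add, Nat.add_sub_cancel_left, Nat.cast_add, add_sub_cancel_left]
  calc ((d + m).choose m : ℝ) * c ^ m ≤ (exp 1 * (d + m) / m) ^ m * c ^ m := by
        gcongr
        exact_mod_cast Nat.choose_le_exp_one_mul_div_pow (d + m) m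
    _ = exp (m * log (c * exp 1 * (1 + m / d) / (m / d))) := by
        rw [exp_nat_mul, exp_log (by positivity), ← mul_pow]
        congr 1
        field_simp
    _ = exp (d * chooseRate c (m / d)) := by
        rw [log_div (by positivity) (by positivity), chooseRate, negMulLog]
        congr 1
        field_simp
        ring

theorem tendsto_chooseRate_zero {c : ℝ} (hc : 0 < c) : Tendsto (chooseRate c) (𝓝 0) (𝓝 0) := by
  have : ContinuousAt (chooseRate c) 0 := by
    unfold chooseRate
    fun_prop (disch := positivity)
  simpa [chooseRate] using this.tendsto

theorem tendsto_FF_of_le_abs {d : ℕ → ℕ} (hdi : Tendsto (fun n => (d n : ℝ)) atTop atTop)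
    (hreg : Tendsto (fun n : ℕ => ((n : ℝ) - d n) / d n) atTop (𝓝 0)) {r : ℝ} (hr : 0 < r)
    {a b : ℕ → ℝ} (hbounds : ∀ᶠ n in atTop, -1 ≤ a n ∧ a n ≤ b n ∧ b n ≤ 1 ∧
      ∀ h ∈ Icc (a n) (b n), r / √(d n) ≤ |h|) :
    Tendsto (fun n => FF n (d n) (a n) (b n)) atTop (𝓝 0) := by
  have hd : ∀ᶠ n in atTop, 5 ≤ d n := by
    filter_upwards [hdi.eventually_ge_atTop 5] with n hn
    exact_mod_cast hn
  have hrate : ∀ᶠ n : ℕ in atTop, chooseRate 3 (((n : ℝ) - d n) / d n) < r ^ 2 / 8 :=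
    ((tendsto_chooseRate_zero three_pos).comp hreg).eventually_lt_const (by positivity)
  have hlim : Tendsto (fun n : ℕ => 4 * (d n : ℝ) * exp (-(r ^ 2 / 8) * d n)) atTop (𝓝 0) := by
    simpa [mul_assoc] using
      ((tendsto_rpow_mul_exp_neg_mul_atTop_nhds_zero 1 _ (by positivity)).comp hdi).const_mul 4
  refine squeeze_zero_norm' ?_ hlim
  filter_upwards [hbounds, hd, hrate] with n ⟨ha, hab, hb, hh⟩ hd hrate
  calc ‖FF n (d n) (a n) (b n)‖
      ≤ 4 * d n * (((n.choose (d n)) : ℝ) * 3 ^ (n - d n)) * exp (-(d n * r ^ 2 / 4)) :=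
        norm_FF_le hd hr.le ha hab hb hh
    _ ≤ 4 * d n * exp (d n * chooseRate 3 (((n : ℝ) - d n) / d n)) *
          exp (-(d n * r ^ 2 / 4)) := by
        gcongr
        exact choose_mul_pow_le_exp_chooseRate three_pos (by omega)
    _ ≤ 4 * d n * exp (-(r ^ 2 / 8) * d n) := by
        rw [mul_assoc, ← exp_add]
        gcongr
        nlinarith [mul_le_mul_of_nonneg_left hrate.le (Nat.cast_nonneg (α := ℝ) (d n))]

theorem facet_range_sublinear_general (d : ℕ → ℕ)
    (hdi : Tendsto (fun n : ℕ => (d n : ℝ)) atTop atTop)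
    (hreg : Tendsto (fun n : ℕ => ((n : ℝ) - (d n : ℝ)) / (d n : ℝ)) atTop (nhds 0)) :
    ∀ r : ℝ, 0 < r →
      Tendsto (fun n : ℕ => FF n (d n) (-1) (-r / Real.sqrt (d n))) atTop (nhds 0) ∧
      Tendsto (fun n : ℕ => FF n (d n) (r / Real.sqrt (d n)) 1) atTop (nhds 0) := by
  intro r hr
  have hsmall : ∀ᶠ n in atTop, r / √(d n) ≤ 1 := by
    filter_upwards [hdi.eventually_ge_atTop (r ^ 2), hdi.eventually_gt_atTop 0] with n hn hn₀
    rw [div_le_one (sqrt_pos.2 hn₀)]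
    exact (le_abs_self r).trans (abs_le_sqrt hn)
  have hpos : ∀ n, 0 ≤ r / √(d n) := fun n => by positivity
  constructor
  · refine tendsto_FF_of_le_abs hdi hreg hr ?_
    filter_upwards [hsmall] with n hn
    rw [neg_div]
    exact ⟨le_rfl, by linarith [hpos n], by linarith [hpos n],
      fun h hh => (le_neg_of_le_neg hh.2).trans (neg_le_abs h)⟩
  · refine tendsto_FF_of_le_abs hdi hreg hr ?_
    filter_upwards [hsmall] with n hn
    exact ⟨by linarith [hpos n], hn, le_rfl, fun h hh => hh.1.trans (le_abs_self h)⟩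

/-- in the sublinear regime (`d → ∞`, `(n-d)/d → 0`), for every fixed `r > 0`,
the expected number of facets with height outside `(-r/√d, r/√d)` tends to zero. -/
theorem facet_range_sublinear (d : ℕ → ℕ)
    (hd : ∀ᶠ n in atTop, 2 ≤ d n ∧ d n < n)
    (hdi : Tendsto (fun n : ℕ => (d n : ℝ)) atTop atTop)
    (hreg : Tendsto (fun n : ℕ => ((n : ℝ) - (d n : ℝ)) / (d n : ℝ)) atTop (nhds 0)) :
    ∀ r : ℝ, 0 < r →
      Tendsto (fun n : ℕ => FF n (d n) (-1) (-r / Real.sqrt (d n))) atTop (nhds 0) ∧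
      Tendsto (fun n : ℕ => FF n (d n) (r / Real.sqrt (d n)) 1) atTop (nhds 0) :=
  facet_range_sublinear_general d hdi hreg
end

section
/- Let α > 0, let Φ be the standard normal CDF, let a_α = √(2π) / ∫_{−√α}^{√α} (1 − s²/α)^{α/2} ds, and for h ∈ [−√α, √α] let Φ_α(h) = (a_α/√(2π)) ∫_{−√α}^h (1 − s²/α)^{α/2} ds. Then a_α ≥ 1, and: (i) for every h ∈ [0, √α], Φ(h) ≤ Φ_α(h) ≤ a_α·Φ(h); (ii) for every h ∈ [−√α, 0], Φ(h) ≥ Φ_α(h) ≥ (1 − a_α)/2 + a_α·Φ(h). -/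
open Filter

/-- The normalizing constant `a_α`. -/
noncomputable def aAlpha (α : ℝ) : ℝ :=
  Real.sqrt (2 * Real.pi) /
    ∫ s in (-(Real.sqrt α))..(Real.sqrt α), (1 - s ^ 2 / α) ^ (α / 2)

/-- The rescaled CDF `Φ_α`. -/
noncomputable def PhiAlpha (α h : ℝ) : ℝ :=
  aAlpha α / Real.sqrt (2 * Real.pi) *
    ∫ s in (-(Real.sqrt α))..h, (1 - s ^ 2 / α) ^ (α / 2)

open MeasureTheory intervalIntegral Set

lemma phiaux_antitone : AntitoneOn (fun x : ℝ => (1 - x) * Real.exp x) (Set.Ici 0) := by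
  have hd : ∀ x : ℝ, HasDerivAt (fun x : ℝ => (1 - x) * Real.exp x) (-x * Real.exp x) x := by
    intro x
    have h1 : HasDerivAt (fun x : ℝ => 1 - x) (-1) x := (hasDerivAt_id x).const_sub 1
    have : HasDerivAt (fun x : ℝ => (1 - x) * Real.exp x) _ x := h1.mul (Real.hasDerivAt_exp x)
    convert this using 1; ring
  apply antitoneOn_of_deriv_nonpos (convex_Ici 0)
  · exact (Continuous.mul (by continuity) Real.continuous_exp).continuousOn
  · intro x _; exact (hd x).differentiableAt.differentiableWithinAt
  · intro x hx
    rw [interior_Ici] at hx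
    rw [(hd x).deriv]
    nlinarith [Real.exp_pos x, le_of_lt (Set.mem_Ioi.mp hx)]


set_option maxHeartbeats 2000000 in
/-- comparison between `Φ` and `Φ_α` (Lemma `phi_bnd` of the paper). -/
theorem Phi_vs_PhiAlpha (α : ℝ) (hα : 0 < α) :
    1 ≤ aAlpha α ∧
    (∀ h ∈ Set.Icc (0 : ℝ) (Real.sqrt α),
      stdPhi h ≤ PhiAlpha α h ∧ PhiAlpha α h ≤ aAlpha α * stdPhi h) ∧
    (∀ h ∈ Set.Icc (-(Real.sqrt α)) (0 : ℝ),
      PhiAlpha α h ≤ stdPhi h ∧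
        (1 - aAlpha α) / 2 + aAlpha α * stdPhi h ≤ PhiAlpha α h) := by
  have h2π : (0:ℝ) < 2 * Real.pi := by positivity
  set SQ := Real.sqrt (2 * Real.pi) with hSQ
  have hπ : 0 < SQ := Real.sqrt_pos.mpr h2π
  set b := Real.sqrt α with hb
  have hb0 : 0 < b := Real.sqrt_pos.mpr hα
  have hb2 : b ^ 2 = α := Real.sq_sqrt hα.le
  set g : ℝ → ℝ := fun s => (1 - s ^ 2 / α) ^ (α / 2) with hg
  set e : ℝ → ℝ := fun s => Real.exp (-s ^ 2 / 2) with he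
  -- continuity and integrability
  have hgc : Continuous g := by
    apply Continuous.rpow_const
    · continuity
    · intro x; right; positivity
  have hec : Continuous e := by rw [he]; continuity
  have hgi : ∀ u v : ℝ, IntervalIntegrable g volume u v := fun u v => hgc.intervalIntegrable u v
  have hei : ∀ u v : ℝ, IntervalIntegrable e volume u v := fun u v => hec.intervalIntegrable u v
  have heint : Integrable e := by
    have h0 := integrable_exp_neg_mul_sq (b := (1/2 : ℝ)) (by norm_num)
    convert h0 using 2 with s
    rw [he]; ring_nf
  have henn : ∀ s : ℝ, 0 ≤ e s := fun s => Real.exp_nonneg _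
  -- total mass of the gaussian
  have hetot : ∫ s : ℝ, e s = SQ := by
    have h0 := integral_gaussian (1/2 : ℝ)
    rw [hSQ]
    rw [show Real.pi / (1/2 : ℝ) = 2 * Real.pi by ring] at h0
    rw [← h0]
    congr 1 with s
    rw [he]; ring_nf
  -- pointwise bounds
  have hbase : ∀ s : ℝ, -b ≤ s → s ≤ b → 0 ≤ 1 - s ^ 2 / α := by
    intro s h1 h2
    rw [sub_nonneg, div_le_one hα, ← hb2]
    exact sq_le_sq' h1 h2
  have hgnn : ∀ s : ℝ, -b ≤ s → s ≤ b → 0 ≤ g s := by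
    intro s h1 h2
    exact Real.rpow_nonneg (hbase s h1 h2) _
  have hge : ∀ s : ℝ, -b ≤ s → s ≤ b → g s ≤ e s := by
    intro s h1 h2
    have h3 : 1 - s ^ 2 / α ≤ Real.exp (-(s ^ 2 / α)) := by
      have := Real.add_one_le_exp (-(s ^ 2 / α)); linarith
    calc g s ≤ Real.exp (-(s ^ 2 / α)) ^ (α/2) :=
          Real.rpow_le_rpow (hbase s h1 h2) h3 (by positivity)
      _ = Real.exp (-(s ^ 2 / α) * (α/2)) := (Real.exp_mul _ _).symm
      _ = e s := by rw [he]; congr 1; field_simp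
  -- ratio monotonicity
  have hratio : ∀ s t : ℝ, 0 ≤ s → s ≤ t → t ≤ b →
      g t * Real.exp (t ^ 2 / 2) ≤ g s * Real.exp (s ^ 2 / 2) := by
    intro s t hs hst htb
    have hsb : s ≤ b := hst.trans htb
    have hs' : (0:ℝ) ≤ s ^ 2 / α := by positivity
    have ht' : (0:ℝ) ≤ t ^ 2 / α := by positivity
    have hst2 : s ^ 2 / α ≤ t ^ 2 / α := by
      gcongr
    have hbt : 0 ≤ 1 - t ^ 2 / α := hbase t (by linarith) htb
    have hbs : 0 ≤ 1 - s ^ 2 / α := hbase s (by linarith) hsb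
    have hkey := phiaux_antitone hs' ht' hst2
    simp only at hkey
    have hrw : ∀ u : ℝ, 0 ≤ 1 - u ^ 2 / α →
        ((1 - u ^ 2 / α) * Real.exp (u ^ 2 / α)) ^ (α/2) = g u * Real.exp (u ^ 2 / 2) := by
      intro u hu
      rw [Real.mul_rpow hu (Real.exp_pos _).le, ← Real.exp_mul]
      congr 2
      field_simp
    calc g t * Real.exp (t ^ 2 / 2)
        = ((1 - t ^ 2 / α) * Real.exp (t ^ 2 / α)) ^ (α/2) := (hrw t hbt).symm
      _ ≤ ((1 - s ^ 2 / α) * Real.exp (s ^ 2 / α)) ^ (α/2) :=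
          Real.rpow_le_rpow (mul_nonneg hbt (Real.exp_pos _).le) hkey (by positivity)
      _ = g s * Real.exp (s ^ 2 / 2) := hrw s hbs
  -- evenness
  have hgeven : ∀ s : ℝ, g (-s) = g s := by intro s; simp only [hg, neg_sq]
  have heeven : ∀ s : ℝ, e (-s) = e s := by intro s; simp only [he, neg_sq]
  -- T and its properties
  set T := ∫ s in (-b)..b, g s with hT
  have hTpos : 0 < T := by
    apply intervalIntegral_pos_of_pos_on (hgi (-b) b) _ (by linarith)
    intro x hx
    rw [hg]
    apply Real.rpow_pos_of_pos
    have : x ^ 2 < b ^ 2 := sq_lt_sq' hx.1 hx.2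
    rw [sub_pos, div_lt_one hα, ← hb2]
    exact this
  have hhalfneg : ∫ s in (-b)..(0:ℝ), g s = ∫ s in (0:ℝ)..b, g s := by
    have h0 : (∫ x in (0:ℝ)..b, g (-x)) = ∫ x in (-b)..(-(0:ℝ)), g x := integral_comp_neg g
    simp only [hgeven, neg_zero] at h0
    exact h0.symm
  have hhalfpos : ∫ s in (0:ℝ)..b, g s = T / 2 := by
    have h0 := integral_add_adjacent_intervals (hgi (-b) 0) (hgi 0 b)
    rw [← hT] at h0
    linarith [hhalfneg]
  have hThalf : ∫ s in (-b)..(0:ℝ), g s = T / 2 := by rw [hhalfneg, hhalfpos]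
  -- the Iic integrals of e
  have hIoi0 : ∫ s in Set.Ioi (0:ℝ), e s = SQ / 2 := by
    have h1 : ∫ s in Set.Iic (0:ℝ), e s = ∫ s in Set.Ioi (0:ℝ), e s := by
      have h0 := integral_comp_neg_Iic (0:ℝ) e
      simp only [heeven, neg_zero] at h0
      exact h0
    have h2 := integral_Iic_add_Ioi (b := (0:ℝ)) heint.integrableOn heint.integrableOn
    rw [hetot] at h2
    linarith
  have hIic0 : ∫ s in Set.Iic (0:ℝ), e s = SQ / 2 := by
    have h0 := integral_comp_neg_Iic (0:ℝ) e
    simp only [heeven, neg_zero] at h0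
    rw [h0, hIoi0]
  have hIic : ∀ r : ℝ, ∫ s in Set.Iic r, e s = SQ / 2 + ∫ s in (0:ℝ)..r, e s := by
    intro r
    have h0 := integral_Iic_sub_Iic (a := (0:ℝ)) (b := r) heint.integrableOn heint.integrableOn
    rw [hIic0] at h0
    linarith
  -- T ≤ SQ
  have he0b : ∫ s in (0:ℝ)..b, e s ≤ SQ / 2 := by
    rw [integral_of_le hb0.le, ← hIoi0]
    apply setIntegral_mono_set heint.integrableOn
    · exact Eventually.of_forall henn
    · exact HasSubset.Subset.eventuallyLE Ioc_subset_Ioi_self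
  have hTle : T ≤ SQ := by
    have h1 : ∫ s in (0:ℝ)..b, g s ≤ ∫ s in (0:ℝ)..b, e s := by
      apply integral_mono_on hb0.le (hgi 0 b) (hei 0 b)
      intro x hx
      exact hge x (by linarith [hx.1]) hx.2
    calc T = 2 * ∫ s in (0:ℝ)..b, g s := by rw [hhalfpos]; ring
      _ ≤ 2 * ∫ s in (0:ℝ)..b, e s := by linarith
      _ ≤ SQ := by linarith
  -- key lemma on [0, b]
  have key : ∀ h : ℝ, 0 ≤ h → h ≤ b →
      T / SQ * ∫ s in (0:ℝ)..h, e s ≤ ∫ s in (0:ℝ)..h, g s := by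
    intro h h0 hhb
    set c := T / SQ with hc
    have hc0 : 0 < c := div_pos hTpos hπ
    have hexp1 : ∀ u : ℝ, e u * Real.exp (u ^ 2 / 2) = 1 := by
      intro u
      rw [he]
      rw [← Real.exp_add, show -u ^ 2 / 2 + u ^ 2 / 2 = (0:ℝ) by ring, Real.exp_zero]
    by_cases hcase : c * e h ≤ g h
    · have hpt : ∀ s ∈ Set.Icc (0:ℝ) h, c * e s ≤ g s := by
        intro s hs
        have hr := hratio s h hs.1 hs.2 hhb
        have hc' : c ≤ g h * Real.exp (h ^ 2 / 2) := by
          have := mul_le_mul_of_nonneg_right hcase (Real.exp_pos (h ^ 2 / 2)).le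
          rw [mul_assoc, hexp1 h, mul_one] at this
          exact this
        have h2 : c ≤ g s * Real.exp (s ^ 2 / 2) := hc'.trans hr
        have := mul_le_mul_of_nonneg_right h2 (henn s)
        rw [mul_comm c (e s)] at this ⊢
        calc e s * c ≤ g s * Real.exp (s ^ 2 / 2) * e s := this
          _ = g s * (e s * Real.exp (s ^ 2 / 2)) := by ring
          _ = g s := by rw [hexp1 s, mul_one]
      calc c * ∫ s in (0:ℝ)..h, e s = ∫ s in (0:ℝ)..h, c * e s := by
            rw [intervalIntegral.integral_const_mul]
        _ ≤ ∫ s in (0:ℝ)..h, g s :=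
            integral_mono_on h0 ((continuous_const.mul hec).intervalIntegrable 0 h) (hgi 0 h) hpt
    · push_neg at hcase
      have hpt : ∀ s ∈ Set.Icc h b, g s ≤ c * e s := by
        intro s hs
        have hr := hratio h s h0 hs.1 hs.2
        have hc' : g h * Real.exp (h ^ 2 / 2) < c := by
          have := mul_lt_mul_of_pos_right hcase (Real.exp_pos (h ^ 2 / 2))
          rw [mul_assoc, hexp1 h, mul_one] at this
          exact this
        have h2 : g s * Real.exp (s ^ 2 / 2) ≤ c := le_of_lt (lt_of_le_of_lt hr hc')
        have := mul_le_mul_of_nonneg_right h2 (henn s)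
        calc g s = g s * (e s * Real.exp (s ^ 2 / 2)) := by rw [hexp1 s, mul_one]
          _ = g s * Real.exp (s ^ 2 / 2) * e s := by ring
          _ ≤ c * e s := this
      have h1 : ∫ s in h..b, g s ≤ c * ∫ s in h..b, e s := by
        rw [← intervalIntegral.integral_const_mul]
        apply integral_mono_on hhb (hgi h b) ((continuous_const.mul hec).intervalIntegrable h b)
        exact hpt
      have hadd := integral_add_adjacent_intervals (hgi 0 h) (hgi h b)
      have haddE := integral_add_adjacent_intervals (hei 0 h) (hei h b)
      rw [hhalfpos] at hadd
      have h3 : c * ∫ s in (0:ℝ)..b, e s ≤ T / 2 := by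
        have h4 : c * SQ = T := by rw [hc]; field_simp
        have h5 : c * ∫ s in (0:ℝ)..b, e s ≤ c * (SQ / 2) :=
          mul_le_mul_of_nonneg_left he0b hc0.le
        nlinarith
      nlinarith [h1, hadd, haddE, h3]
  -- mirrored integrals
  have hmirrorg : ∀ h : ℝ, ∫ s in (0:ℝ)..h, g s = - ∫ s in (0:ℝ)..(-h), g s := by
    intro h
    have h0 := integral_comp_neg g (a := (0:ℝ)) (b := -h)
    simp only [hgeven, neg_neg, neg_zero] at h0
    rw [integral_symm, ← h0]
  have hmirrore : ∀ h : ℝ, ∫ s in (0:ℝ)..h, e s = - ∫ s in (0:ℝ)..(-h), e s := by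
    intro h
    have h0 := integral_comp_neg e (a := (0:ℝ)) (b := -h)
    simp only [heeven, neg_neg, neg_zero] at h0
    rw [integral_symm, ← h0]
  -- splitting of the integral from -b
  have hsplit : ∀ h : ℝ, ∫ s in (-b)..h, g s = T / 2 + ∫ s in (0:ℝ)..h, g s := by
    intro h
    rw [← integral_add_adjacent_intervals (hgi (-b) 0) (hgi 0 h), hThalf]
  -- closed forms
  have haA : aAlpha α = SQ / T := by rw [aAlpha, ← hSQ, ← hb, ← hg, ← hT]
  have hPhiA : ∀ h : ℝ, PhiAlpha α h = (T / 2 + ∫ s in (0:ℝ)..h, g s) / T := by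
    intro h
    rw [PhiAlpha, haA, ← hSQ, ← hb, ← hg, hsplit h]
    field_simp
  have hstd : ∀ h : ℝ, stdPhi h = (SQ / 2 + ∫ s in (0:ℝ)..h, e s) / SQ := by
    intro h
    rw [stdPhi, ← hSQ, ← he, hIic h, inv_mul_eq_div]
  refine ⟨?_, ?_, ?_⟩
  · rw [haA]
    exact (one_le_div hTpos).mpr hTle
  · rintro h ⟨h0, hhb⟩
    have hkey := key h h0 hhb
    have hIgIe : ∫ s in (0:ℝ)..h, g s ≤ ∫ s in (0:ℝ)..h, e s := by
      apply integral_mono_on h0 (hgi 0 h) (hei 0 h)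
      intro x hx
      exact hge x (by linarith [hx.1]) (hx.2.trans hhb)
    have hprod : T * ∫ s in (0:ℝ)..h, e s ≤ SQ * ∫ s in (0:ℝ)..h, g s := by
      have h5 := mul_le_mul_of_nonneg_left hkey hπ.le
      rw [show SQ * (T / SQ * ∫ s in (0:ℝ)..h, e s) = T / SQ * SQ * ∫ s in (0:ℝ)..h, e s by ring,
        div_mul_cancel₀ _ hπ.ne'] at h5
      exact h5
    constructor
    · rw [hstd h, hPhiA h, div_le_div_iff₀ hπ hTpos]
      nlinarith [hprod]
    · rw [hPhiA h, hstd h, haA,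
        show SQ / T * ((SQ / 2 + ∫ s in (0:ℝ)..h, e s) / SQ)
          = (SQ / 2 + ∫ s in (0:ℝ)..h, e s) / T by field_simp]
      rw [div_le_div_iff₀ hTpos hTpos]
      nlinarith [hIgIe, hTle]
  · rintro h ⟨hbh, h0⟩
    have hkey := key (-h) (by linarith) (by linarith)
    have hIgIe : ∫ s in (0:ℝ)..(-h), g s ≤ ∫ s in (0:ℝ)..(-h), e s := by
      apply integral_mono_on (by linarith) (hgi 0 (-h)) (hei 0 (-h))
      intro x hx
      exact hge x (by linarith [hx.1]) (by linarith [hx.2])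
    have hprod : T * ∫ s in (0:ℝ)..(-h), e s ≤ SQ * ∫ s in (0:ℝ)..(-h), g s := by
      have h5 := mul_le_mul_of_nonneg_left hkey hπ.le
      rw [show SQ * (T / SQ * ∫ s in (0:ℝ)..(-h), e s) = T / SQ * SQ * ∫ s in (0:ℝ)..(-h), e s
          by ring, div_mul_cancel₀ _ hπ.ne'] at h5
      exact h5
    have hmg := hmirrorg h
    have hme := hmirrore h
    constructor
    · rw [hPhiA h, hstd h, div_le_div_iff₀ hTpos hπ]
      nlinarith [hprod, hmg, hme]
    · rw [hPhiA h, hstd h, haA,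
        show (1 - SQ / T) / 2 + SQ / T * ((SQ / 2 + ∫ s in (0:ℝ)..h, e s) / SQ)
          = (T / 2 + ∫ s in (0:ℝ)..h, e s) / T by field_simp; ring]
      rw [div_le_div_iff₀ hTpos hTpos]
      nlinarith [hIgIe, hmg, hme]
end

section
/- For every real D > −1 and every h ∈ (0,1), the integral ∫_h^1 (1 − s²)^D ds satisfies 1 − (1 − h²)/(2h²(D+2)) ≤ (∫_h^1 (1 − s²)^D ds) · (2h(D+1)/(1 − h²)^{D+1}) ≤ 1; equivalently, (1 − (1−h²)/(2h²(D+2)))·(1−h²)^{D+1}/(2h(D+1)) ≤ ∫_h^1 (1 − s²)^D ds ≤ (1−h²)^{D+1}/(2h(D+1)). -/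
open Filter

open MeasureTheory Set



lemma image_lemma {h : ℝ} (h0 : 0 < h) (h1 : h < 1) :
    (fun s : ℝ => 1 - s ^ 2) '' Set.Ioo h 1 = Set.Ioo 0 (1 - h ^ 2) := by
  ext u
  constructor
  · rintro ⟨s, ⟨hs1, hs2⟩, rfl⟩
    simp only [Set.mem_Ioo]
    exact ⟨by nlinarith, by nlinarith⟩
  · rintro ⟨hu1, hu2⟩
    refine ⟨Real.sqrt (1 - u), ⟨?_, ?_⟩, ?_⟩
    · have hh : h = Real.sqrt (h ^ 2) := by
        rw [Real.sqrt_sq h0.le]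
      rw [hh]
      exact Real.sqrt_lt_sqrt (by positivity) (by nlinarith [sq_nonneg h])
    · have : Real.sqrt (1 - u) < Real.sqrt 1 :=
        Real.sqrt_lt_sqrt (by nlinarith [sq_nonneg h]) (by linarith)
      simpa using this
    · show 1 - Real.sqrt (1 - u) ^ 2 = u
      rw [Real.sq_sqrt (by nlinarith [sq_nonneg h] : (0:ℝ) ≤ 1 - u)]
      ring

lemma key (E : ℝ) (hE : -1 < E) (h : ℝ) (h0 : 0 < h) (h1 : h < 1) :
    (∫ s in Set.Ioo h 1, s * (1 - s ^ 2) ^ E) = (1 - h ^ 2) ^ (E + 1) / (2 * (E + 1)) ∧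
    MeasureTheory.IntegrableOn (fun s => s * (1 - s ^ 2) ^ E) (Set.Ioo h 1) := by
  have hs : MeasurableSet (Set.Ioo h (1:ℝ)) := measurableSet_Ioo
  have hderiv : ∀ x ∈ Set.Ioo h (1:ℝ),
      HasDerivWithinAt (fun s : ℝ => 1 - s ^ 2) (-(2 * x)) (Set.Ioo h 1) x := by
    intro x hx
    have : HasDerivAt (fun s : ℝ => 1 - s ^ 2) (-(2 * x)) x := by
      have := (hasDerivAt_pow 2 x).const_sub 1
      simpa using this
    exact this.hasDerivWithinAt
  have hinj : Set.InjOn (fun s : ℝ => 1 - s ^ 2) (Set.Ioo h 1) := by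
    intro a ha b hb hab
    simp only at hab
    nlinarith [ha.1, hb.1]
  have himg := image_lemma h0 h1
  have heq := MeasureTheory.integral_image_eq_integral_abs_deriv_smul hs hderiv hinj
      (fun u : ℝ => u ^ E)
  rw [himg] at heq
  have habs : ∀ x ∈ Set.Ioo h (1:ℝ), |(-(2 * x))| = 2 * x := by
    intro x hx
    rw [abs_neg, abs_of_pos (by nlinarith [hx.1])]
  have heq2 : (∫ u in Set.Ioo 0 (1 - h ^ 2), u ^ E) =
      2 * ∫ s in Set.Ioo h 1, s * (1 - s ^ 2) ^ E := by
    rw [heq, ← MeasureTheory.integral_const_mul]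
    refine MeasureTheory.setIntegral_congr_fun hs ?_
    intro x hx
    simp only [smul_eq_mul]
    rw [habs x hx]
    ring
  have hIrpow : MeasureTheory.IntegrableOn (fun u : ℝ => u ^ E) (Set.Ioo 0 (1 - h ^ 2)) := by
    have := (intervalIntegral.intervalIntegrable_rpow' (a := 0) (b := 1 - h ^ 2) hE)
    have h2 : (0:ℝ) ≤ 1 - h ^ 2 := by nlinarith
    have := (intervalIntegrable_iff_integrableOn_Ioo_of_le h2).mp this
    exact this
  have hInt : MeasureTheory.IntegrableOn (fun s => s * (1 - s ^ 2) ^ E) (Set.Ioo h 1) := by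
    have := (MeasureTheory.integrableOn_image_iff_integrableOn_abs_deriv_smul hs hderiv hinj
        (fun u : ℝ => u ^ E)).mp (by rwa [himg])
    have h2 : MeasureTheory.IntegrableOn
        (fun x : ℝ => |(-(2*x))| • ((1 - x ^ 2) ^ E)) (Set.Ioo h 1) := this
    have h3 := h2.mul_const (1/2 : ℝ)
    have h4 : MeasureTheory.IntegrableOn
        (fun x : ℝ => |(-(2*x))| • ((1 - x ^ 2) ^ E) * (1/2)) (Set.Ioo h 1) := h3
    refine MeasureTheory.IntegrableOn.congr_fun h4 ?_ hs
    intro x hx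
    simp only [smul_eq_mul]
    rw [habs x hx]
    ring
  have hval : (∫ u in Set.Ioo 0 (1 - h ^ 2), u ^ E) = (1 - h ^ 2) ^ (E + 1) / (E + 1) := by
    rw [← MeasureTheory.integral_Ioc_eq_integral_Ioo,
      ← intervalIntegral.integral_of_le (by nlinarith : (0:ℝ) ≤ 1 - h ^ 2)]
    rw [integral_rpow (Or.inl hE)]
    rw [Real.zero_rpow (by linarith : E + 1 ≠ 0)]
    ring
  constructor
  · have hE1 : E + 1 ≠ 0 := by linarith
    field_simp at heq2 hval ⊢
    nlinarith [heq2, hval]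
  · exact hInt

lemma pointwise_low (h s p c₁ c₂ : ℝ) (h0 : 0 < h) (hs : h < s) (hp : 0 < p)
    (hc₁ : c₁ = 1/h - (1-h^2)/(2*h^3)) (hc₂ : c₂ = 1/(2*h^3)) :
    c₁ * (s * p) + c₂ * (s * (p * (1 - s^2))) ≤ p := by
  have hkey : p - (c₁ * (s * p) + c₂ * (s * (p * (1 - s^2)))) =
      p * ((s - h)^2 * (s + 2*h)) / (2*h^3) := by
    rw [hc₁, hc₂]; field_simp; ring
  have hpos : (0:ℝ) ≤ p * ((s - h)^2 * (s + 2*h)) / (2*h^3) := by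
    have : (0:ℝ) ≤ s + 2*h := by linarith
    positivity
  linarith [hkey, hpos]


set_option maxHeartbeats 1000000 in
/-- for `D > -1` and `h ∈ (0,1)`,
`1 - (1-h²)/(2h²(D+2)) ≤ (∫_h^1 (1-s²)^D ds)·(2h(D+1)/(1-h²)^{D+1}) ≤ 1`. -/
theorem integral_tail_bounds (D : ℝ) (hD : -1 < D) (h : ℝ) (hh : h ∈ Set.Ioo (0 : ℝ) 1) :
    1 - (1 - h ^ 2) / (2 * h ^ 2 * (D + 2)) ≤
      (∫ s in h..(1 : ℝ), (1 - s ^ 2) ^ D) * (2 * h * (D + 1) / (1 - h ^ 2) ^ (D + 1)) ∧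
    (∫ s in h..(1 : ℝ), (1 - s ^ 2) ^ D) * (2 * h * (D + 1) / (1 - h ^ 2) ^ (D + 1)) ≤ 1 := by
  obtain ⟨h0, h1⟩ := hh
  have hb2 : (0:ℝ) < 1 - h ^ 2 := by nlinarith
  have hD1 : (0:ℝ) < D + 1 := by linarith
  have hD2 : (0:ℝ) < D + 2 := by linarith
  have hK : (0:ℝ) < (1 - h ^ 2) ^ (D + 1) := Real.rpow_pos_of_pos hb2 _
  obtain ⟨hJ1, hI1⟩ := key D hD h h0 h1
  obtain ⟨hJ2, hI2⟩ := key (D + 1) (by linarith) h h0 h1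
  have hIoo : (∫ s in h..(1 : ℝ), (1 - s ^ 2) ^ D)
      = ∫ s in Set.Ioo h 1, (1 - s ^ 2) ^ D := by
    rw [intervalIntegral.integral_of_le h1.le, MeasureTheory.integral_Ioc_eq_integral_Ioo]
  set A := ∫ s in Set.Ioo h 1, (1 - s ^ 2) ^ D with hA
  -- integrability of the integrand
  have hmeas : AEStronglyMeasurable (fun s : ℝ => (1 - s ^ 2) ^ D)
      (volume.restrict (Set.Ioo h 1)) := by
    apply Measurable.aestronglyMeasurable
    fun_prop
  have hptle : ∀ s ∈ Set.Ioo h (1:ℝ),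
      (1 - s ^ 2) ^ D ≤ 1 / h * (s * (1 - s ^ 2) ^ D) := by
    intro s hs
    have hp : (0:ℝ) ≤ (1 - s ^ 2) ^ D := Real.rpow_nonneg (by nlinarith [hs.1, hs.2]) _
    rw [one_div, inv_mul_eq_div, le_div_iff₀ h0]
    nlinarith [mul_le_mul_of_nonneg_left hs.1.le hp]
  have hIg : IntegrableOn (fun s : ℝ => (1 - s ^ 2) ^ D) (Set.Ioo h 1) := by
    refine (hI1.const_mul (1 / h)).mono hmeas ?_
    filter_upwards [ae_restrict_mem measurableSet_Ioo] with s hs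
    have hp : (0:ℝ) ≤ (1 - s ^ 2) ^ D := Real.rpow_nonneg (by nlinarith [hs.1, hs.2]) _
    have hle := hptle s hs
    rw [Real.norm_eq_abs, Real.norm_eq_abs, abs_of_nonneg hp,
      abs_of_nonneg (hp.trans hle)]
    exact hle
  -- upper bound on A
  have hup : A ≤ 1 / h * ((1 - h ^ 2) ^ (D + 1) / (2 * (D + 1))) := by
    calc A ≤ ∫ s in Set.Ioo h 1, 1 / h * (s * (1 - s ^ 2) ^ D) :=
          setIntegral_mono_on hIg (hI1.const_mul (1 / h)) measurableSet_Ioo hptle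
      _ = 1 / h * ∫ s in Set.Ioo h 1, s * (1 - s ^ 2) ^ D :=
          MeasureTheory.integral_const_mul _ _
      _ = _ := by rw [hJ1]
  -- lower bound on A
  set c₁ : ℝ := 1 / h - (1 - h ^ 2) / (2 * h ^ 3) with hc₁
  set c₂ : ℝ := 1 / (2 * h ^ 3) with hc₂
  have hlow : c₁ * ((1 - h ^ 2) ^ (D + 1) / (2 * (D + 1)))
      + c₂ * ((1 - h ^ 2) ^ (D + 1 + 1) / (2 * (D + 1 + 1))) ≤ A := by
    have hple : ∀ s ∈ Set.Ioo h (1:ℝ),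
        c₁ * (s * (1 - s ^ 2) ^ D) + c₂ * (s * (1 - s ^ 2) ^ (D + 1))
          ≤ (1 - s ^ 2) ^ D := by
      intro s hs
      have hbs : (0:ℝ) < 1 - s ^ 2 := by nlinarith [hs.1, hs.2]
      have hp : (0:ℝ) < (1 - s ^ 2) ^ D := Real.rpow_pos_of_pos hbs _
      have hsp : (1 - s ^ 2) ^ (D + 1) = (1 - s ^ 2) ^ D * (1 - s ^ 2) :=
        Real.rpow_add_one hbs.ne' D
      rw [hsp]
      have := pointwise_low h s ((1 - s ^ 2) ^ D) c₁ c₂ h0 hs.1 hp hc₁ hc₂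
      linarith [this]
    calc c₁ * ((1 - h ^ 2) ^ (D + 1) / (2 * (D + 1)))
          + c₂ * ((1 - h ^ 2) ^ (D + 1 + 1) / (2 * (D + 1 + 1)))
        = ∫ s in Set.Ioo h 1,
            (c₁ * (s * (1 - s ^ 2) ^ D) + c₂ * (s * (1 - s ^ 2) ^ (D + 1))) := by
          rw [MeasureTheory.integral_add (hI1.const_mul c₁) (hI2.const_mul c₂),
            MeasureTheory.integral_const_mul, MeasureTheory.integral_const_mul, hJ1, hJ2]
      _ ≤ A := by
            refine setIntegral_mono_on ?_ hIg measurableSet_Ioo hple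
            exact (hI1.const_mul c₁).add (hI2.const_mul c₂)
  have hKne : (1 - h ^ 2) ^ (D + 1) ≠ 0 := hK.ne'
  have hMpos : (0:ℝ) < 2 * h * (D + 1) / (1 - h ^ 2) ^ (D + 1) := by
    apply div_pos (by nlinarith) hK
  have hrpow2 : (1 - h ^ 2) ^ (D + 1 + 1) = (1 - h ^ 2) ^ (D + 1) * (1 - h ^ 2) :=
    Real.rpow_add_one hb2.ne' (D + 1)
  rw [hIoo]
  constructor
  · have heq : (c₁ * ((1 - h ^ 2) ^ (D + 1) / (2 * (D + 1)))
        + c₂ * ((1 - h ^ 2) ^ (D + 1 + 1) / (2 * (D + 1 + 1))))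
        * (2 * h * (D + 1) / (1 - h ^ 2) ^ (D + 1))
        = 1 - (1 - h ^ 2) / (2 * h ^ 2 * (D + 2)) := by
      rw [hrpow2, hc₁, hc₂]
      have h2 : D + 1 + 1 = D + 2 := by ring
      rw [h2]
      field_simp
      ring
    rw [← heq]
    exact mul_le_mul_of_nonneg_right hlow hMpos.le
  · have heq : (1 / h * ((1 - h ^ 2) ^ (D + 1) / (2 * (D + 1))))
        * (2 * h * (D + 1) / (1 - h ^ 2) ^ (D + 1)) = 1 := by
      field_simp
    calc A * (2 * h * (D + 1) / (1 - h ^ 2) ^ (D + 1))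
        ≤ (1 / h * ((1 - h ^ 2) ^ (D + 1) / (2 * (D + 1))))
            * (2 * h * (D + 1) / (1 - h ^ 2) ^ (D + 1)) :=
          mul_le_mul_of_nonneg_right hup hMpos.le
      _ = 1 := heq
end
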